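/- arXiv:2110.07781 — 2 statements merged into one kernel-verified Lean document; each statement's English description precedes it below -/
import Mathlib

section
/- For every positive integer n, the number of one-dimensional subspaces ℂ·ψ of ℂ² (ψ nonzero) with χ(ψ^{⊗n}) < χ_n is at most n·C(S_n, χ_n − 1), where S_n is the number of distinct one-dimensional subspaces of ℂ^{𝔽₂ⁿ} spanned by stabilizer state vectors and C(·,·) denotes the binomial coefficient. Similarly, the number of one-dimensional subspaces ℂ·ψ of ℂ² with χℝ(ψ^{⊗n}) < χ_nℝ is at most n·C(S_nℝ, χ_nℝ − 1), where S_nℝ is the number of distinct one-dimensional subspaces of ℂ^{𝔽₂ⁿ} spanned by real stabilizer state vectors. -/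
/-!
Let `k = χ_n - 1`. If `χ(ψ^{⊗n}) ≤ k`, then `ψ^{⊗n}` lies in the span `V_T` of some set `T` of `k`
stabilizer lines. A tensor power `ψ₀^{⊗n}` of maximal rank lies in no `V_T`, so some linear form
`f` kills `V_T` but not `ψ₀^{⊗n}`; then `(a, b) ↦ f ((a, b)^{⊗n})` is a nonzero binary form of
degree `n`, which vanishes at no more than `n` points of `ℙ¹`. Summing over the `C(S_n, k)` sets `T`
gives the bound. Nothing is used about stabilizer states beyond their being finitely many up to
scalars and spanning `ℂ^{𝔽₂ⁿ}`, so the real case is the same argument.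
-/

open scoped BigOperators Classical

noncomputable section

namespace StabPaper

/-- The space `𝔽₂ⁿ` of length-`n` bitstrings. -/
abbrev F2 (n : ℕ) := Fin n → ZMod 2

/-- `A ⊆ 𝔽₂ⁿ` is a (nonempty) affine linear subspace. -/
def IsAffineSubspace {n : ℕ} (A : Set (F2 n)) : Prop :=
  A.Nonempty ∧ ∀ x ∈ A, ∀ y ∈ A, ∀ z ∈ A, x + y + z ∈ A

/-- `l : 𝔽₂ⁿ → 𝔽₂` is a linear form. -/
def IsLinearForm {n : ℕ} (l : F2 n → ZMod 2) : Prop :=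
  ∀ x y, l (x + y) = l x + l y

/-- `q : 𝔽₂ⁿ → 𝔽₂` is a quadratic form (polynomial of degree at most 2
with vanishing constant term). -/
def IsQuadraticForm {n : ℕ} (q : F2 n → ZMod 2) : Prop :=
  q 0 = 0 ∧ ∀ x y z, q (x + y + z) = q (x + y) + q (x + z) + q (y + z) + q x + q y + q z

/-- A stabilizer state vector on `n` qubits. -/
def IsStabilizerState {n : ℕ} (σ : F2 n → ℂ) : Prop :=
  ∃ (A : Set (F2 n)) (l q : F2 n → ZMod 2),
    IsAffineSubspace A ∧ IsLinearForm l ∧ IsQuadraticForm q ∧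
    ∀ x, σ x = if x ∈ A then Complex.I ^ (l x).val * (-1 : ℂ) ^ (q x).val else 0

/-- A real stabilizer state vector on `n` qubits (the case `l = 0`). -/
def IsRealStabilizerState {n : ℕ} (σ : F2 n → ℂ) : Prop :=
  ∃ (A : Set (F2 n)) (q : F2 n → ZMod 2),
    IsAffineSubspace A ∧ IsQuadraticForm q ∧
    ∀ x, σ x = if x ∈ A then (-1 : ℂ) ^ (q x).val else 0

/-- The stabilizer rank: the least `r` such that `ψ` is a `ℂ`-linear combination of
`r` stabilizer state vectors. -/
def stabRank {n : ℕ} (ψ : F2 n → ℂ) : ℕ :=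
  sInf {r : ℕ | ∃ (c : Fin r → ℂ) (σ : Fin r → (F2 n → ℂ)),
    (∀ i, IsStabilizerState (σ i)) ∧ ψ = ∑ i, c i • σ i}

/-- The real stabilizer rank: the least `r` such that `ψ` is a `ℂ`-linear combination of
`r` real stabilizer state vectors. -/
def realStabRank {n : ℕ} (ψ : F2 n → ℂ) : ℕ :=
  sInf {r : ℕ | ∃ (c : Fin r → ℂ) (σ : Fin r → (F2 n → ℂ)),
    (∀ i, IsRealStabilizerState (σ i)) ∧ ψ = ∑ i, c i • σ i}

/-- The `n`-fold tensor power of a one-qubit vector `ψ : ℂ²`. -/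
def tensorPow (ψ : ZMod 2 → ℂ) (n : ℕ) : F2 n → ℂ := fun x => ∏ i, ψ (x i)

/-- The Euclidean norm on `ℂ^{𝔽₂ⁿ}`. -/
def l2norm {n : ℕ} (φ : F2 n → ℂ) : ℝ := Real.sqrt (∑ x, ‖φ x‖ ^ 2)

/-- The δ-approximate stabilizer rank. -/
def approxStabRank {n : ℕ} (δ : ℝ) (ψ : F2 n → ℂ) : ℕ :=
  sInf {r : ℕ | ∃ φ : F2 n → ℂ, φ ≠ 0 ∧
    l2norm (fun x => ((l2norm φ : ℝ) : ℂ)⁻¹ * φ x - ((l2norm ψ : ℝ) : ℂ)⁻¹ * ψ x) < δ ∧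
    stabRank φ = r}

/-- The one-qubit vector `a·e₀ + b·e₁ ∈ ℂ²`. -/
def qubit (a b : ℂ) : ZMod 2 → ℂ := fun x => if x = 0 then a else b

/-- A nonzero `ψ ∈ ℂ²` is a one-qubit stabilizer state vector iff it is proportional to
one of `e₀, e₁, e₀+e₁, e₀−e₁, e₀+i·e₁, e₀−i·e₁`. -/
def IsQubitStabVec (ψ : ZMod 2 → ℂ) : Prop :=
  ∃ c : ℂ, c ≠ 0 ∧ (ψ = c • qubit 1 0 ∨ ψ = c • qubit 0 1 ∨ ψ = c • qubit 1 1 ∨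
    ψ = c • qubit 1 (-1) ∨ ψ = c • qubit 1 Complex.I ∨ ψ = c • qubit 1 (-Complex.I))

/-- The `n`-th generic stabilizer rank `χ_n`. -/
def genStabRank (n : ℕ) : ℕ :=
  sSup {r : ℕ | ∃ ψ : ZMod 2 → ℂ, ψ ≠ 0 ∧ stabRank (tensorPow ψ n) = r}

/-- The `n`-th generic real stabilizer rank `χ_nℝ`. -/
def genRealStabRank (n : ℕ) : ℕ :=
  sSup {r : ℕ | ∃ ψ : ZMod 2 → ℂ, ψ ≠ 0 ∧ realStabRank (tensorPow ψ n) = r}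


/-- The set of one-dimensional subspaces of `ℂ^{𝔽₂ⁿ}` spanned by stabilizer state
vectors (projective stabilizer states). -/
def stabLines (n : ℕ) : Set (Submodule ℂ (F2 n → ℂ)) :=
  {L | ∃ σ : F2 n → ℂ, IsStabilizerState σ ∧ L = Submodule.span ℂ {σ}}

/-- The set of one-dimensional subspaces of `ℂ^{𝔽₂ⁿ}` spanned by real stabilizer state
vectors (projective real stabilizer states). -/
def realStabLines (n : ℕ) : Set (Submodule ℂ (F2 n → ℂ)) :=
  {L | ∃ σ : F2 n → ℂ, IsRealStabilizerState σ ∧ L = Submodule.span ℂ {σ}}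

section Rank

variable (K : Type*) {M : Type*} [Semiring K] [AddCommMonoid M] [Module K M]

/-- `stabRank`, `stabLines` and `genStabRank` are `combRank ℂ`, `lines ℂ` and `genericRank` at
`P = IsStabilizerState` (and likewise in the real case).
`combRank K P v = 0` when `v ∉ span K P`. -/
def combRank (P : M → Prop) (v : M) : ℕ :=
  sInf {r : ℕ | ∃ (c : Fin r → K) (σ : Fin r → M), (∀ i, P (σ i)) ∧ v = ∑ i, c i • σ i}

def lines (P : M → Prop) : Set (Submodule K M) :=
  {L | ∃ σ, P σ ∧ L = Submodule.span K {σ}}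

variable {K} {P : M → Prop} {v : M}

theorem combRank_le_of_eq_sum {ι : Type*} (s : Finset ι) (c : ι → K) (σ : ι → M)
    (hP : ∀ i ∈ s, P (σ i)) (hv : v = ∑ i ∈ s, c i • σ i) : combRank K P v ≤ s.card := by
  let e := s.equivFin.symm
  refine Nat.sInf_le ⟨fun j => c (e j), fun j => σ (e j), fun j => hP _ (e j).2, ?_⟩
  rw [hv, ← Finset.sum_coe_sort s, ← e.sum_comp]

theorem exists_eq_sum_combRank (hv : v ∈ Submodule.span K {σ | P σ}) :
    ∃ (c : Fin (combRank K P v) → K) (σ : Fin (combRank K P v) → M),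
      (∀ i, P (σ i)) ∧ v = ∑ i, c i • σ i := by
  obtain ⟨r, c, σ, hsum⟩ := Submodule.mem_span_set'.mp hv
  exact Nat.sInf_mem (s := {r : ℕ | ∃ (c : Fin r → K) (σ : Fin r → M),
    (∀ i, P (σ i)) ∧ v = ∑ i, c i • σ i}) ⟨r, c, fun i => σ i, fun i => (σ i).2, hsum.symm⟩

theorem finite_lines (h : {σ | P σ}.Finite) : (lines K P).Finite :=
  (h.image fun σ => Submodule.span K {σ}).subset fun _ ⟨σ, hσ, hL⟩ => ⟨σ, hσ, hL.symm⟩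

theorem combRank_le_card_of_mem_iSup {T : Finset (Submodule K M)} (hT : ↑T ⊆ lines K P)
    (hv : v ∈ ⨆ L ∈ T, L) : combRank K P v ≤ T.card := by
  obtain ⟨μ, hμ⟩ := (Submodule.mem_iSup_finset_iff_exists_sum _ v).mp hv
  choose! σ hσP hσL using fun L (hL : L ∈ T) => hT (Finset.mem_coe.mpr hL)
  have hc : ∀ L ∈ T, ∃ c : K, c • σ L = μ L := fun L hL =>
    Submodule.mem_span_singleton.mp (hσL L hL ▸ (μ L).2)
  choose! c hc using hc
  refine combRank_le_of_eq_sum T c σ hσP ?_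
  rw [← hμ]
  exact (Finset.sum_congr rfl hc).symm

theorem span_le_iSup_lines {S : Finset (Submodule K M)} (hS : ↑S = lines K P) :
    Submodule.span K {σ | P σ} ≤ ⨆ L ∈ S, L :=
  Submodule.span_le.mpr fun σ hσ =>
    have hL : Submodule.span K {σ} ∈ S := by rw [← Finset.mem_coe, hS]; exact ⟨σ, hσ, rfl⟩
    Submodule.mem_iSup_of_mem _ (Submodule.mem_iSup_of_mem hL (Submodule.mem_span_singleton_self σ))

theorem combRank_le_ncard_lines (hfin : (lines K P).Finite)
    (hv : v ∈ Submodule.span K {σ | P σ}) : combRank K P v ≤ (lines K P).ncard := by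
  rw [Set.ncard_eq_toFinset_card _ hfin]
  exact combRank_le_card_of_mem_iSup (by simp) (span_le_iSup_lines (by simp) hv)

theorem exists_mem_powersetCard_mem_iSup (hfin : (lines K P).Finite)
    (hv : v ∈ Submodule.span K {σ | P σ}) {k : ℕ} (hvk : combRank K P v ≤ k)
    (hk : k ≤ (lines K P).ncard) :
    ∃ T ∈ hfin.toFinset.powersetCard k, v ∈ ⨆ L ∈ T, L := by
  obtain ⟨c, σ, hσ, hv⟩ := exists_eq_sum_combRank hv
  let T₀ := Finset.univ.image fun i => Submodule.span K {σ i}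
  have hT₀ : T₀ ⊆ hfin.toFinset := by
    simp only [T₀, Finset.image_subset_iff, Set.Finite.mem_toFinset]
    exact fun i _ => ⟨σ i, hσ i, rfl⟩
  have hT₀k : T₀.card ≤ k := Finset.card_image_le.trans (by simpa using hvk)
  obtain ⟨T, hT₀T, hTS, hTk⟩ :=
    Finset.exists_subsuperset_card_eq hT₀ hT₀k (by rwa [← Set.ncard_eq_toFinset_card _ hfin])
  refine ⟨T, Finset.mem_powersetCard.mpr ⟨hTS, hTk⟩, hv ▸ Submodule.sum_mem _ fun i _ => ?_⟩
  have hi : Submodule.span K {σ i} ∈ T := hT₀T (Finset.mem_image_of_mem _ (Finset.mem_univ i))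
  exact Submodule.mem_iSup_of_mem _ (Submodule.mem_iSup_of_mem hi
    (Submodule.smul_mem _ _ (Submodule.mem_span_singleton_self _)))

end Rank

open Polynomial

/-- The left side counts the zeros on `ℙ¹` of the binary form of degree `n` that dehomogenizes to
`p`, the last term being the point at infinity. -/
theorem card_roots_toFinset_add_le {R : Type*} [CommRing R] [IsDomain R] {p : R[X]} {n : ℕ}
    (hp : p ≠ 0) (hdeg : p.natDegree ≤ n) : p.roots.toFinset.card + (if p.coeff n = 0 then 1 else 0) ≤ n := by
  have hroots : p.roots.toFinset.card ≤ p.natDegree :=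
    (Multiset.toFinset_card_le _).trans (card_roots' p)
  split_ifs with hc
  · have : p.natDegree ≠ n := fun h => leadingCoeff_ne_zero.mpr hp (by rwa [leadingCoeff, h])
    omega
  · omega

section TensorPow

variable {n : ℕ}

theorem tensorPow_smul (c : ℂ) (ψ : ZMod 2 → ℂ) : tensorPow (c • ψ) n = c ^ n • tensorPow ψ n := by
  funext x
  simp [tensorPow, Finset.prod_mul_distrib]

theorem eq_qubit (ψ : ZMod 2 → ℂ) : ψ = qubit (ψ 0) (ψ 1) :=
  funext fun x => by fin_cases x <;> rfl

theorem smul_qubit (c a b : ℂ) : c • qubit a b = qubit (c * a) (c * b) := by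
  funext x
  by_cases hx : x = 0 <;> simp [qubit, hx]

theorem exists_smul_qubit {ψ : ZMod 2 → ℂ} (hψ : ψ ≠ 0) :
    ∃ c : ℂ, c ≠ 0 ∧ ((∃ t, ψ = c • qubit 1 t) ∨ ψ = c • qubit 0 1) := by
  rw [eq_qubit ψ] at hψ ⊢
  by_cases h0 : ψ 0 = 0
  · exact ⟨ψ 1, fun h1 => hψ (funext fun x => by simp [qubit, h0, h1]),
      Or.inr (by simp [smul_qubit, h0])⟩
  · exact ⟨ψ 0, h0, Or.inl ⟨ψ 1 / ψ 0, by simp [smul_qubit, mul_div_cancel₀ _ h0]⟩⟩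

theorem tensorPow_qubit_one_apply (t : ℂ) (x : F2 n) :
    tensorPow (qubit 1 t) n x = t ^ hammingNorm x := by
  simp [tensorPow, qubit, Finset.prod_ite, hammingNorm]

theorem hammingNorm_eq_iff_eq_one (x : F2 n) : hammingNorm x = n ↔ x = 1 := by
  have h : ∀ z : ZMod 2, z ≠ 0 ↔ z = 1 := by decide
  simpa [hammingNorm, h, funext_iff] using
    Finset.card_filter_eq_iff (s := Finset.univ) (p := fun i => x i ≠ 0)

theorem tensorPow_qubit_zero_one : tensorPow (qubit 0 1) n = Pi.single 1 1 := by
  funext x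
  have h : ∀ z : ZMod 2, qubit 0 1 z = if z = 1 then 1 else 0 := by
    intro z; fin_cases z <;> rfl
  simp [tensorPow, h, Fintype.prod_boole, Pi.single_apply, funext_iff]

def tensorPowPoly (f : (F2 n → ℂ) →ₗ[ℂ] ℂ) : ℂ[X] :=
  ∑ x, C (f (Pi.single x 1)) * X ^ hammingNorm x

theorem eval_tensorPowPoly (f : (F2 n → ℂ) →ₗ[ℂ] ℂ) (t : ℂ) :
    (tensorPowPoly f).eval t = f (tensorPow (qubit 1 t) n) := by
  rw [f.pi_apply_eq_sum_univ, tensorPowPoly, eval_finsetSum]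
  refine Finset.sum_congr rfl fun x _ => ?_
  rw [eval_mul, eval_C, eval_pow, eval_X, tensorPow_qubit_one_apply, smul_eq_mul, mul_comm]
  congr 2
  funext y
  simp [Pi.single_apply, eq_comm]

theorem coeff_tensorPowPoly (f : (F2 n → ℂ) →ₗ[ℂ] ℂ) :
    (tensorPowPoly f).coeff n = f (tensorPow (qubit 0 1) n) := by
  simp [tensorPowPoly, tensorPow_qubit_zero_one, eq_comm (a := n), hammingNorm_eq_iff_eq_one]

theorem natDegree_tensorPowPoly_le (f : (F2 n → ℂ) →ₗ[ℂ] ℂ) : (tensorPowPoly f).natDegree ≤ n :=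
  natDegree_sum_le_of_forall_le _ _ fun x _ =>
    (natDegree_C_mul_X_pow_le _ _).trans (by simpa using hammingNorm_le_card_fintype (x := x))

def tensorPowLines (V : Submodule ℂ (F2 n → ℂ)) : Set (Submodule ℂ (ZMod 2 → ℂ)) :=
  {L | ∃ ψ, ψ ≠ 0 ∧ L = Submodule.span ℂ {ψ} ∧ tensorPow ψ n ∈ V}

theorem encard_tensorPowLines_le (V : Submodule ℂ (F2 n → ℂ)) {ψ₀ : ZMod 2 → ℂ}
    (hψ₀ : ψ₀ ≠ 0) (h₀ : tensorPow ψ₀ n ∉ V) : (tensorPowLines V).encard ≤ n := by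
  obtain ⟨f, hf₀, hfV⟩ := V.exists_dual_map_eq_bot_of_notMem h₀ inferInstance
  have hf : ∀ v ∈ V, f v = 0 := fun v hv =>
    (Submodule.mem_bot ℂ).mp (hfV ▸ Submodule.mem_map_of_mem hv)
  have hsmul : ∀ {c : ℂ} (φ : ZMod 2 → ℂ), c ≠ 0 → (tensorPow (c • φ) n ∈ V ↔ tensorPow φ n ∈ V) :=
    fun φ hc => by rw [tensorPow_smul]; exact V.smul_mem_iff (pow_ne_zero _ hc)
  have hp : tensorPowPoly f ≠ 0 := by
    intro hp
    obtain ⟨c, -, ⟨t, rfl⟩ | rfl⟩ := exists_smul_qubit hψ₀ <;> apply hf₀ <;>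
      rw [tensorPow_smul, map_smul]
    · rw [← eval_tensorPowPoly, hp, eval_zero, smul_zero]
    · rw [← coeff_tensorPowPoly, hp, coeff_zero, smul_zero]
  let B : Finset (Submodule ℂ (ZMod 2 → ℂ)) :=
    (tensorPowPoly f).roots.toFinset.image (fun t => Submodule.span ℂ {qubit 1 t}) ∪
      if (tensorPowPoly f).coeff n = 0 then {Submodule.span ℂ {qubit 0 1}} else ∅
  have hB : B.card ≤ n := by
    refine (Finset.card_union_le _ _).trans ((add_le_add Finset.card_image_le ?_).trans
      (card_roots_toFinset_add_le hp (natDegree_tensorPowPoly_le f)))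
    split_ifs <;> simp
  calc _ ≤ (B : Set (Submodule ℂ (ZMod 2 → ℂ))).encard := Set.encard_le_encard ?_
    _ ≤ n := by rw [Set.encard_coe_eq_coe_finsetCard]; exact_mod_cast hB
  rintro L ⟨ψ, hψ, rfl, hV⟩
  obtain ⟨c, hc, ⟨t, rfl⟩ | rfl⟩ := exists_smul_qubit hψ <;>
    rw [hsmul _ hc] at hV <;> rw [Submodule.span_singleton_smul_eq (IsUnit.mk0 c hc)]
  · refine Finset.mem_union_left _ (Finset.mem_image_of_mem _ ?_)
    rw [Multiset.mem_toFinset, mem_roots hp, IsRoot, eval_tensorPowPoly]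
    exact hf _ hV
  · have : (tensorPowPoly f).coeff n = 0 := by rw [coeff_tensorPowPoly]; exact hf _ hV
    simp [B, this]

end TensorPow

section Generic

variable {n : ℕ} {P : (F2 n → ℂ) → Prop}

def genericRank (P : (F2 n → ℂ) → Prop) : ℕ :=
  sSup {r : ℕ | ∃ ψ : ZMod 2 → ℂ, ψ ≠ 0 ∧ combRank ℂ P (tensorPow ψ n) = r}

theorem exists_combRank_eq_genericRank (hfin : (lines ℂ P).Finite)
    (hspan : Submodule.span ℂ {σ | P σ} = ⊤) :
    ∃ ψ₀ : ZMod 2 → ℂ, ψ₀ ≠ 0 ∧ combRank ℂ P (tensorPow ψ₀ n) = genericRank P := by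
  have hne : qubit 1 0 ≠ 0 := fun h => by simpa [qubit] using congrFun h 0
  refine Nat.sSup_mem (s := {r | ∃ ψ : ZMod 2 → ℂ, ψ ≠ 0 ∧ combRank ℂ P (tensorPow ψ n) = r})
    ⟨_, _, hne, rfl⟩ ⟨(lines ℂ P).ncard, ?_⟩
  rintro _ ⟨ψ, -, rfl⟩
  exact combRank_le_ncard_lines hfin (hspan ▸ Submodule.mem_top)

def subgenericLines (P : (F2 n → ℂ) → Prop) : Set (Submodule ℂ (ZMod 2 → ℂ)) :=
  {L | ∃ ψ, ψ ≠ 0 ∧ L = Submodule.span ℂ {ψ} ∧ combRank ℂ P (tensorPow ψ n) < genericRank P}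

theorem subgenericLines_subset_biUnion (hfin : (lines ℂ P).Finite)
    (hspan : Submodule.span ℂ {σ | P σ} = ⊤) :
    subgenericLines P ⊆ ⋃ T ∈ hfin.toFinset.powersetCard (genericRank P - 1),
      tensorPowLines (⨆ L ∈ T, L) := by
  rintro _ ⟨ψ, hψ, rfl, hlt⟩
  obtain ⟨ψ₀, -, hg⟩ := exists_combRank_eq_genericRank hfin hspan
  have hmem : ∀ v, v ∈ Submodule.span ℂ {σ | P σ} := fun v => hspan ▸ Submodule.mem_top
  have hψ₀ := combRank_le_ncard_lines hfin (hmem (tensorPow ψ₀ n))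
  obtain ⟨T, hT, hψT⟩ :=
    exists_mem_powersetCard_mem_iSup hfin (hmem (tensorPow ψ n)) (k := genericRank P - 1)
      (by omega) (by omega)
  exact Set.mem_biUnion hT ⟨ψ, hψ, rfl, hψT⟩

theorem ncard_subgenericLines_le (hfin : (lines ℂ P).Finite)
    (hspan : Submodule.span ℂ {σ | P σ} = ⊤) :
    (subgenericLines P).ncard ≤ n * (lines ℂ P).ncard.choose (genericRank P - 1) := by
  obtain ⟨ψ₀, hψ₀, hg⟩ := exists_combRank_eq_genericRank hfin hspan
  rcases Nat.eq_zero_or_pos (genericRank P) with h0 | hpos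
  · simp [subgenericLines, h0]
  set S := hfin.toFinset
  set k := genericRank P - 1
  have hT : ∀ T ∈ S.powersetCard k, (tensorPowLines (⨆ L ∈ T, L)).encard ≤ n := by
    intro T hT
    rw [Finset.mem_powersetCard] at hT
    refine encard_tensorPowLines_le _ hψ₀ fun hψ₀T => ?_
    have := combRank_le_card_of_mem_iSup (by simpa [S] using hT.1) hψ₀T
    omega
  have hencard := calc
    (subgenericLines P).encard
      ≤ (⋃ T ∈ S.powersetCard k, tensorPowLines (⨆ L ∈ T, L)).encard :=
        Set.encard_le_encard (subgenericLines_subset_biUnion hfin hspan)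
    _ ≤ ∑ T ∈ S.powersetCard k, (tensorPowLines (⨆ L ∈ T, L)).encard :=
        Finset.set_encard_biUnion_le _ _
    _ ≤ ∑ T ∈ S.powersetCard k, (n : ℕ∞) := Finset.sum_le_sum hT
    _ = ↑(n * (lines ℂ P).ncard.choose k) := by
      simp [Finset.card_powersetCard, Set.ncard_eq_toFinset_card _ hfin, S, mul_comm]
  exact (Set.encard_le_coe_iff_finite_ncard_le.mp hencard).2

end Generic

section Stabilizer

variable {n : ℕ}

theorem IsRealStabilizerState.isStabilizerState {σ : F2 n → ℂ} (h : IsRealStabilizerState σ) :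
    IsStabilizerState σ := by
  obtain ⟨A, q, hA, hq, hσ⟩ := h
  exact ⟨A, 0, q, hA, fun _ _ => by simp, hq, fun x => by simp [hσ x]⟩

theorem isRealStabilizerState_single (x : F2 n) : IsRealStabilizerState (Pi.single x 1) := by
  refine ⟨{x}, 0, ⟨Set.singleton_nonempty x, ?_⟩, ⟨rfl, fun _ _ _ => by simp⟩, fun y => ?_⟩
  · rintro _ rfl _ rfl _ rfl
    simp [ZModModule.add_self]
  · by_cases h : y = x <;> simp [h]

theorem span_realStabilizerStates_eq_top :
    Submodule.span ℂ {σ : F2 n → ℂ | IsRealStabilizerState σ} = ⊤ :=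
  top_unique <| (Pi.basisFun ℂ (F2 n)).span_eq.ge.trans <| Submodule.span_mono <|
    Set.range_subset_iff.mpr fun x => by simpa using isRealStabilizerState_single x

theorem span_stabilizerStates_eq_top : Submodule.span ℂ {σ : F2 n → ℂ | IsStabilizerState σ} = ⊤ :=
  top_unique <| span_realStabilizerStates_eq_top.ge.trans <|
    Submodule.span_mono fun _ h => IsRealStabilizerState.isStabilizerState h

theorem finite_stabilizerStates : {σ : F2 n → ℂ | IsStabilizerState σ}.Finite := by
  refine (Set.finite_range fun p : Set (F2 n) × (F2 n → ZMod 2) × (F2 n → ZMod 2) =>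
    fun x => if x ∈ p.1 then Complex.I ^ (p.2.1 x).val * (-1 : ℂ) ^ (p.2.2 x).val else 0).subset ?_
  rintro σ ⟨A, l, q, -, -, -, hσ⟩
  exact ⟨(A, l, q), (funext hσ).symm⟩

end Stabilizer

theorem subgeneric_states_count_general (n : ℕ) :
    ({L : Submodule ℂ (ZMod 2 → ℂ) | ∃ ψ : ZMod 2 → ℂ, ψ ≠ 0 ∧
        L = Submodule.span ℂ {ψ} ∧ stabRank (tensorPow ψ n) < genStabRank n}.ncard
      ≤ n * Nat.choose (stabLines n).ncard (genStabRank n - 1)) ∧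
    ({L : Submodule ℂ (ZMod 2 → ℂ) | ∃ ψ : ZMod 2 → ℂ, ψ ≠ 0 ∧
        L = Submodule.span ℂ {ψ} ∧ realStabRank (tensorPow ψ n) < genRealStabRank n}.ncard
      ≤ n * Nat.choose (realStabLines n).ncard (genRealStabRank n - 1)) :=
  ⟨ncard_subgenericLines_le (finite_lines finite_stabilizerStates) span_stabilizerStates_eq_top,
    ncard_subgenericLines_le
      (finite_lines <| finite_stabilizerStates.subset fun _ =>
        IsRealStabilizerState.isStabilizerState)
      span_realStabilizerStates_eq_top⟩

/-- The number of lines `ℂ·ψ` in `ℂ²` with `χ(ψ^{⊗n}) < χ_n` is at most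
`n·C(S_n, χ_n − 1)`, where `S_n` is the number of projective stabilizer states;
likewise for the real stabilizer rank. -/
theorem subgeneric_states_count (n : ℕ) (hn : 1 ≤ n) :
    ({L : Submodule ℂ (ZMod 2 → ℂ) | ∃ ψ : ZMod 2 → ℂ, ψ ≠ 0 ∧
        L = Submodule.span ℂ {ψ} ∧ stabRank (tensorPow ψ n) < genStabRank n}.ncard
      ≤ n * Nat.choose (stabLines n).ncard (genStabRank n - 1)) ∧
    ({L : Submodule ℂ (ZMod 2 → ℂ) | ∃ ψ : ZMod 2 → ℂ, ψ ≠ 0 ∧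
        L = Submodule.span ℂ {ψ} ∧ realStabRank (tensorPow ψ n) < genRealStabRank n}.ncard
      ≤ n * Nat.choose (realStabLines n).ncard (genRealStabRank n - 1)) :=
  subgeneric_states_count_general n

end StabPaper
end
end

section
/- For every positive integer n, the number of distinct one-dimensional subspaces of ℂ^{𝔽₂ⁿ} spanned by stabilizer state vectors equals 2ⁿ·∏_{k=1}^n (2^k + 1). -/
open scoped BigOperators Classical

noncomputable section

namespace StabPaper

/-!
A stabilizer line is determined by its support, a coset `t + V` of a subspace `V ≤ 𝔽₂ⁿ`, and by
its normalised phases: scaled to take the value `1` at a fixed representative `t`, the state is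
`t + v ↦ i^{l v} (-1)^{q v}` for a linear form `l` and a quadratic form `q` on `V`. Conversely each
such triple gives a stabilizer state, after extending `l` and `q` to `𝔽₂ⁿ` through a projection
onto `V`. A quadratic form on `𝔽₂ × M` amounts to an arbitrary value at `(1, 0)`, an arbitrary
linear form on `M` (its polar form against `(1, 0)`) and a quadratic form on `M`, so there are
`2^{d(d+1)/2}` quadratic forms on `𝔽₂^d` and the number of lines is
`∑_V 2^{n-d} · 2^d · 2^{d(d+1)/2} = 2ⁿ ∑_V 2^{d(d+1)/2}` with `d = dim V`.

The sum `S(m) = ∑_{V ≤ 𝔽₂^m} 2^{d(d+1)/2}` satisfies `S(m+1) = (2^{m+1} + 1) S(m)`: fix a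
hyperplane `H`. The subspaces inside `H` contribute `S(m)`. A subspace `V ⊄ H` has dimension
`dim W + 1` where `W = V ∩ H`, and for given `W` there are `2^{m - dim W}` of them, so together
they contribute `2^{m+1} S(m)`.
-/

open Module (finrank)

lemma zmod_two_eq_zero_or_one (a : ZMod 2) : a = 0 ∨ a = 1 := by
  revert a; decide

def phase (a b : ZMod 2) : ℂ := Complex.I ^ a.val * (-1 : ℂ) ^ b.val

@[simp] lemma phase_zero_zero : phase 0 0 = 1 := by simp [phase]
@[simp] lemma phase_zero_one : phase 0 1 = -1 := by simp [phase, ZMod.val_one]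
@[simp] lemma phase_one_zero : phase 1 0 = Complex.I := by simp [phase, ZMod.val_one]
@[simp] lemma phase_one_one : phase 1 1 = -Complex.I := by simp [phase, ZMod.val_one]

lemma phase_ne_zero (a b : ZMod 2) : phase a b ≠ 0 := by
  simp [phase, Complex.I_ne_zero]

lemma phase_inj {a b a' b' : ZMod 2} : phase a b = phase a' b' ↔ a = a' ∧ b = b' := by
  refine ⟨fun h => ?_, fun h => h.1 ▸ h.2 ▸ rfl⟩
  rcases zmod_two_eq_zero_or_one a with rfl | rfl <;>
    rcases zmod_two_eq_zero_or_one b with rfl | rfl <;>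
    rcases zmod_two_eq_zero_or_one a' with rfl | rfl <;>
    rcases zmod_two_eq_zero_or_one b' with rfl | rfl <;>
    simp_all [Complex.ext_iff] <;> norm_num at h

/-- `i^a i^x = i^{a + x} (-1)^{a x}` once `a + x` is reduced mod 2. -/
lemma phase_add (a b x y : ZMod 2) : phase (a + x) (b + y + a * x) = phase a b * phase x y := by
  rcases zmod_two_eq_zero_or_one a with rfl | rfl <;>
    rcases zmod_two_eq_zero_or_one b with rfl | rfl <;>
    rcases zmod_two_eq_zero_or_one x with rfl | rfl <;>
    rcases zmod_two_eq_zero_or_one y with rfl | rfl <;>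
    simp [CharTwo.add_self_eq_zero]

section QuadForm

variable {M N : Type*} [AddCommGroup M] [AddCommGroup N]

/-- `IsQuadraticForm`, on an arbitrary abelian group instead of `F2 n`. -/
def IsQuadForm (q : M → ZMod 2) : Prop :=
  q 0 = 0 ∧ ∀ x y z, q (x + y + z) = q (x + y) + q (x + z) + q (y + z) + q x + q y + q z

lemma IsQuadForm.add {q q' : M → ZMod 2} (hq : IsQuadForm q) (hq' : IsQuadForm q') :
    IsQuadForm (q + q') := by
  refine ⟨by simp [hq.1, hq'.1], fun x y z => ?_⟩
  simp only [Pi.add_apply, hq.2 x y z, hq'.2 x y z]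
  ring

lemma IsQuadForm.comp {q : M → ZMod 2} (hq : IsQuadForm q) (g : N →+ M) : IsQuadForm (q ∘ g) :=
  ⟨by simp [hq.1], fun x y z => by simp only [Function.comp_apply, map_add, hq.2]⟩

lemma isQuadForm_mul (l l' : M →+ ZMod 2) : IsQuadForm fun x => l x * l' x :=
  ⟨by simp, fun x y z => by simp only [map_add]; ring_nf; reduce_mod_char⟩

lemma isQuadForm_addMonoidHom (l : M →+ ZMod 2) : IsQuadForm l :=
  ⟨map_zero l, fun x y z => by simp only [map_add]; ring_nf; reduce_mod_char⟩

def IsQuadForm.polar {q : M → ZMod 2} (hq : IsQuadForm q) (s : M) : M →+ ZMod 2 :=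
  AddMonoidHom.mk' (fun v => q (s + v) + q s + q v) fun v w => by
    rw [← add_assoc, hq.2]; ring_nf; reduce_mod_char

lemma IsQuadForm.polar_apply {q : M → ZMod 2} (hq : IsQuadForm q) (s v : M) :
    hq.polar s v = q (s + v) + q s + q v := rfl

def rebase (l : M →+ ZMod 2) (q : M → ZMod 2) (s : M) : M → ZMod 2 :=
  fun v => q (s + v) + q s + l s * l v

lemma isQuadForm_rebase {q : M → ZMod 2} (hq : IsQuadForm q) (l : M →+ ZMod 2) (s : M) :
    IsQuadForm (rebase l q s) := by
  have h : rebase l q s = q + ⇑(hq.polar s + (AddMonoidHom.mulLeft (l s)).comp l) := by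
    ext v
    simp only [rebase, Pi.add_apply, AddMonoidHom.add_apply, hq.polar_apply,
      AddMonoidHom.comp_apply, AddMonoidHom.coe_mulLeft]
    ring_nf; reduce_mod_char
  rw [h]
  exact hq.add (isQuadForm_addMonoidHom _)

lemma phase_rebase (l : M →+ ZMod 2) (q : M → ZMod 2) (s v : M) :
    phase (l (s + v)) (q (s + v)) = phase (l s) (q s) * phase (l v) (rebase l q s v) := by
  rw [← phase_add, map_add, rebase]; congr 1; ring_nf; reduce_mod_char

abbrev QuadForm (M : Type*) [AddCommGroup M] := {q : M → ZMod 2 // IsQuadForm q}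

def QuadForm.congr (e : M ≃+ N) : QuadForm M ≃ QuadForm N where
  toFun q := ⟨q.1 ∘ e.symm, q.2.comp e.symm.toAddMonoidHom⟩
  invFun q := ⟨q.1 ∘ e, q.2.comp e.toAddMonoidHom⟩
  left_inv q := by ext; simp
  right_inv q := by ext; simp

end QuadForm

section QuadFormCount

variable {M : Type*} [AddCommGroup M] [Module (ZMod 2) M]

def QuadForm.prodEquiv : QuadForm (ZMod 2 × M) ≃ ZMod 2 × (M →+ ZMod 2) × QuadForm M where
  toFun q := (q.1 (1, 0), (q.2.polar (1, 0)).comp (AddMonoidHom.inr _ _),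
    ⟨q.1 ∘ AddMonoidHom.inr _ _, q.2.comp _⟩)
  invFun p := ⟨fun x => x.1 * p.1 + x.1 * p.2.1 x.2 + p.2.2.1 x.2, by
    have hd := isQuadForm_addMonoidHom
      ((AddMonoidHom.mulRight p.1).comp (AddMonoidHom.fst (ZMod 2) M))
    have hb := isQuadForm_mul (AddMonoidHom.fst (ZMod 2) M) (p.2.1.comp (AddMonoidHom.snd _ M))
    exact (hd.add hb).add (p.2.2.2.comp (AddMonoidHom.snd (ZMod 2) M))⟩
  left_inv q := by
    ext ⟨a, m⟩
    rcases zmod_two_eq_zero_or_one a with rfl | rfl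
    · simp
    · simp only [AddMonoidHom.comp_apply, AddMonoidHom.inr_apply, IsQuadForm.polar_apply,
        Function.comp_apply, Prod.mk_add_mk, add_zero, zero_add, one_mul]
      ring_nf; reduce_mod_char
  right_inv p := by
    obtain ⟨d, b, q, hq⟩ := p
    ext m
    · simp [hq.1]
    · simp only [AddMonoidHom.comp_apply, AddMonoidHom.inr_apply, IsQuadForm.polar_apply,
        Prod.mk_add_mk, add_zero, zero_add, one_mul, zero_mul, map_zero, hq.1]
      ring_nf; reduce_mod_char
    · simp

lemma card_addMonoidHom_zmod_two [Module.Finite (ZMod 2) M] :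
    Nat.card (M →+ ZMod 2) = 2 ^ finrank (ZMod 2) M := by
  rw [Nat.card_congr (AddMonoidHom.toZModLinearMapEquiv 2).toEquiv,
    Module.natCard_eq_pow_finrank (K := ZMod 2), Nat.card_zmod, Subspace.dual_finrank_eq]

lemma card_quadForm_pi (k : ℕ) : Nat.card (QuadForm (Fin k → ZMod 2)) = 2 ^ (k + 1).choose 2 := by
  induction k with
  | zero =>
    have hsub : Subsingleton (QuadForm (Fin 0 → ZMod 2)) :=
      ⟨fun q q' => Subtype.ext <| funext fun x => by rw [Subsingleton.elim x 0, q.2.1, q'.2.1]⟩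
    have hne : Nonempty (QuadForm (Fin 0 → ZMod 2)) := ⟨⟨0, isQuadForm_addMonoidHom 0⟩⟩
    rw [Nat.card_eq_one_iff_unique.2 ⟨hsub, hne⟩]
    rfl
  | succ k ih =>
    rw [Nat.card_congr ((QuadForm.congr
        (Fin.consLinearEquiv (ZMod 2) fun _ => ZMod 2).toAddEquiv).symm.trans QuadForm.prodEquiv),
      Nat.card_prod, Nat.card_prod, ih, card_addMonoidHom_zmod_two, Nat.card_zmod,
      Module.finrank_fin_fun, Nat.choose_succ_succ' (k + 1), Nat.choose_one_right, pow_add,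
      pow_succ]
    ring

lemma card_quadForm [Module.Finite (ZMod 2) M] :
    Nat.card (QuadForm M) = 2 ^ (finrank (ZMod 2) M + 1).choose 2 := by
  rw [Nat.card_congr (QuadForm.congr (Module.finBasis (ZMod 2) M).equivFun.toAddEquiv),
    card_quadForm_pi]

end QuadFormCount

section Transverse

variable {M : Type*} [AddCommGroup M] [Module (ZMod 2) M] (f : M →ₗ[ZMod 2] ZMod 2)

abbrev IsTransverse (W V : Submodule (ZMod 2) M) : Prop :=
  ¬ V ≤ LinearMap.ker f ∧ V ⊓ LinearMap.ker f = W

lemma mem_comap_mkQ_span_singleton {W : Submodule (ZMod 2) M} (c : M ⧸ W) (x : M) :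
    x ∈ (Submodule.span (ZMod 2) {c}).comap W.mkQ ↔ W.mkQ x = 0 ∨ W.mkQ x = c := by
  simp only [Submodule.mem_comap, Submodule.mem_span_singleton]
  constructor
  · rintro ⟨a, ha⟩
    rcases zmod_two_eq_zero_or_one a with rfl | rfl <;> simp [← ha]
  · rintro (h | h)
    exacts [⟨0, by simp [h]⟩, ⟨1, by simp [h]⟩]

variable {f} {W : Submodule (ZMod 2) M}

lemma isTransverse_comap_mkQ_span (hW : W ≤ LinearMap.ker f) {c : M ⧸ W}
    (hc : W.liftQ f hW c = 1) : IsTransverse f W ((Submodule.span (ZMod 2) {c}).comap W.mkQ) := by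
  obtain ⟨u, rfl⟩ := W.mkQ_surjective c
  have hfu : f u = 1 := by rwa [Submodule.mkQ_apply, Submodule.liftQ_apply] at hc
  refine ⟨fun hle => ?_, ?_⟩
  · have := hle ((mem_comap_mkQ_span_singleton _ u).2 (Or.inr rfl))
    simp [hfu] at this
  · ext x
    rw [Submodule.mem_inf, mem_comap_mkQ_span_singleton, LinearMap.mem_ker, Submodule.mkQ_apply,
      Submodule.Quotient.mk_eq_zero]
    constructor
    · rintro ⟨hx | hx, hfx⟩
      · exact hx
      · have := congrArg (W.liftQ f hW) hx
        simp [hfx, hfu] at this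
    · exact fun hx => ⟨Or.inl hx, hW hx⟩

/-- A subspace `V` transverse to `ker f` with trace `W` is `W + span {u}` for any `u ∈ V` off
`ker f`, and is determined by the class of `u` in `M ⧸ W`. -/
lemma card_isTransverse_eq_card_fiber (hW : W ≤ LinearMap.ker f) :
    Nat.card {V // IsTransverse f W V} = Nat.card {c : M ⧸ W // W.liftQ f hW c = 1} := by
  refine (Nat.card_eq_of_bijective (fun c => ⟨_, isTransverse_comap_mkQ_span hW c.2⟩)
    ⟨fun c c' h => ?_, fun V => ?_⟩).symm
  · obtain ⟨c, hc⟩ := c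
    obtain ⟨u, rfl⟩ := W.mkQ_surjective c
    have hV : (Submodule.span (ZMod 2) {W.mkQ u}).comap W.mkQ =
        (Submodule.span (ZMod 2) {c'.1}).comap W.mkQ := congrArg Subtype.val h
    have hu := (mem_comap_mkQ_span_singleton c'.1 u).1 <|
      hV ▸ (mem_comap_mkQ_span_singleton _ u).2 (Or.inr rfl)
    refine Subtype.ext (hu.resolve_left fun h0 => ?_)
    simp [h0] at hc
  · obtain ⟨V, hVH, hVW⟩ := V
    obtain ⟨u, huV, huH⟩ := SetLike.not_le_iff_exists.1 hVH
    have hfu : f u = 1 := (zmod_two_eq_zero_or_one (f u)).resolve_left huH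
    have hWV : W ≤ V := hVW ▸ inf_le_left
    refine ⟨⟨W.mkQ u, by simpa using hfu⟩, Subtype.ext (SetLike.ext fun x => ?_)⟩
    change x ∈ (Submodule.span (ZMod 2) {W.mkQ u}).comap W.mkQ ↔ x ∈ V
    rw [mem_comap_mkQ_span_singleton, Submodule.mkQ_apply, Submodule.mkQ_apply,
      Submodule.Quotient.mk_eq_zero, Submodule.Quotient.eq, ZModModule.sub_eq_add]
    constructor
    · rintro (hx | hx)
      · exact hWV hx
      · simpa [add_assoc, ZModModule.add_self] using V.add_mem (hWV hx) huV
    · intro hx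
      rcases zmod_two_eq_zero_or_one (f x) with hfx | hfx
      · exact Or.inl (hVW ▸ ⟨hx, hfx⟩)
      · refine Or.inr (hVW ▸ ⟨V.add_mem hx huV, ?_⟩)
        simp [LinearMap.mem_ker, hfx, hfu, CharTwo.add_self_eq_zero]

lemma two_mul_card_apply_eq_one {N : Type*} [AddCommGroup N] [Module (ZMod 2) N]
    [Module.Finite (ZMod 2) N] {g : N →ₗ[ZMod 2] ZMod 2} (hg : g ≠ 0) :
    2 * Nat.card {c : N // g c = 1} = 2 ^ finrank (ZMod 2) N := by
  obtain ⟨x₀, hx₀⟩ := LinearMap.surjective hg 1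
  have e : {c : N // g c = 1} ≃ LinearMap.ker g :=
    Equiv.subtypeEquiv (Equiv.addRight x₀) fun c => by
      rw [Equiv.coe_addRight, LinearMap.mem_ker, map_add, hx₀]
      rcases zmod_two_eq_zero_or_one (g c) with h | h <;> simp [h, CharTwo.add_self_eq_zero]
  rw [Nat.card_congr e, Module.natCard_eq_pow_finrank (K := ZMod 2), Nat.card_zmod,
    ← Module.Dual.finrank_ker_add_one_of_ne_zero hg, pow_succ, mul_comm]

lemma card_isTransverse_mul [Module.Finite (ZMod 2) M] (hf : f ≠ 0) (hW : W ≤ LinearMap.ker f) :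
    Nat.card {V // IsTransverse f W V} * 2 ^ (finrank (ZMod 2) W + 1) =
      2 ^ finrank (ZMod 2) M := by
  have hf' : W.liftQ f hW ≠ 0 := fun h0 => hf <| by
    ext x
    simpa using LinearMap.congr_fun h0 (W.mkQ x)
  rw [card_isTransverse_eq_card_fiber hW, pow_succ, ← W.finrank_quotient_add_finrank, pow_add,
    ← two_mul_card_apply_eq_one hf']
  ring

lemma finrank_eq_finrank_inf_ker_add_one [Module.Finite (ZMod 2) M] {V : Submodule (ZMod 2) M}
    (hV : ¬ V ≤ LinearMap.ker f) :
    finrank (ZMod 2) V = finrank (ZMod 2) ↥(V ⊓ LinearMap.ker f) + 1 := by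
  have hfV : f.domRestrict V ≠ 0 := fun h0 => hV fun x hx => by
    simpa using LinearMap.congr_fun h0 ⟨x, hx⟩
  rw [← Module.Dual.finrank_ker_add_one_of_ne_zero hfV, LinearMap.ker_domRestrict,
    ← Submodule.map_comap_subtype, Submodule.finrank_map_subtype_eq]

end Transverse

section SubspaceSum

variable {M : Type*} [AddCommGroup M] [Module (ZMod 2) M] [Finite M]

instance : Fintype (Submodule (ZMod 2) M) := Fintype.ofFinite _

lemma sum_le_eq_sum_submodule (H : Submodule (ZMod 2) M) (g : ℕ → ℕ) :
    ∑ V with V ≤ H, g (finrank (ZMod 2) V) =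
      ∑ W : Submodule (ZMod 2) H, g (finrank (ZMod 2) W) := by
  rw [Finset.sum_subtype _ (p := (· ≤ H)) (by simp),
    ← (Submodule.MapSubtype.orderIso H).toEquiv.sum_comp]
  exact Finset.sum_congr rfl fun W _ => congrArg g (Submodule.finrank_map_subtype_eq H W)

lemma sum_isTransverse {f : M →ₗ[ZMod 2] ZMod 2} (hf : f ≠ 0) {W : Submodule (ZMod 2) M}
    (hW : W ≤ LinearMap.ker f) :
    ∑ V with IsTransverse f W V, 2 ^ (finrank (ZMod 2) V + 1).choose 2 =
      2 ^ finrank (ZMod 2) M * 2 ^ (finrank (ZMod 2) W + 1).choose 2 := by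
  have hV : ∀ V ∈ ({V | IsTransverse f W V} : Finset _),
      finrank (ZMod 2) V = finrank (ZMod 2) W + 1 := fun V hV => by
    obtain ⟨hVH, hVW⟩ := (Finset.mem_filter.1 hV).2
    rw [finrank_eq_finrank_inf_ker_add_one hVH, hVW]
  rw [Finset.sum_congr rfl fun V h => by rw [hV V h], Finset.sum_const, smul_eq_mul,
    ← card_isTransverse_mul hf hW, Nat.card_eq_fintype_card, Fintype.card_subtype,
    Nat.choose_succ_succ' (_ + 1), Nat.choose_one_right, pow_add]
  ring

theorem sum_two_pow_choose_finrank_submodule :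
    ∑ V : Submodule (ZMod 2) M, 2 ^ (finrank (ZMod 2) V + 1).choose 2 =
      ∏ k ∈ Finset.Icc 1 (finrank (ZMod 2) M), (2 ^ k + 1) := by
  induction hM : finrank (ZMod 2) M generalizing M with
  | zero =>
    have : Subsingleton M := Module.finrank_zero_iff.1 hM
    have : Unique (Submodule (ZMod 2) M) := ⟨⟨⊥⟩, fun _ => Subsingleton.elim _ _⟩
    have h0 (V : Submodule (ZMod 2) M) : finrank (ZMod 2) V = 0 := by
      have := V.finrank_le
      omega
    simp [h0]
  | succ m ih =>
    obtain ⟨f, hf⟩ : ∃ f : Module.Dual (ZMod 2) M, f ≠ 0 := by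
      have : Nontrivial M := (Module.finrank_pos_iff (R := ZMod 2)).1 (by omega)
      obtain ⟨v, hv⟩ := exists_ne (0 : M)
      obtain ⟨f, hfv⟩ := not_forall.1 (mt (Module.forall_dual_apply_eq_zero_iff (ZMod 2) v).1 hv)
      exact ⟨f, fun h => hfv (by simp [h])⟩
    have hH : finrank (ZMod 2) (LinearMap.ker f) = m := by
      have := f.finrank_ker_add_one_of_ne_zero hf
      omega
    set H := LinearMap.ker f
    have hle : ∑ V with V ≤ H, 2 ^ (finrank (ZMod 2) V + 1).choose 2 =
        ∏ k ∈ Finset.Icc 1 m, (2 ^ k + 1) :=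
      (sum_le_eq_sum_submodule H fun d => 2 ^ (d + 1).choose 2).trans (ih hH)
    have hnot : ∑ V with ¬ V ≤ H, 2 ^ (finrank (ZMod 2) V + 1).choose 2 =
        2 ^ (m + 1) * ∏ k ∈ Finset.Icc 1 m, (2 ^ k + 1) := by
      rw [← Finset.sum_fiberwise_of_maps_to (g := (· ⊓ H)) (t := {W | W ≤ H}) (by simp),
        ← hle, Finset.mul_sum, ← hM]
      refine Finset.sum_congr rfl fun W hW => ?_
      rw [Finset.filter_filter]
      exact sum_isTransverse hf (Finset.mem_filter.1 hW).2
    rw [← Finset.sum_filter_add_sum_filter_not _ (· ≤ H), hle, hnot,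
      Finset.prod_Icc_succ_top (by omega)]
    ring

end SubspaceSum

section CosetState

variable {M : Type*} [AddCommGroup M] [Module (ZMod 2) M]

def cosetState (V : Submodule (ZMod 2) M) (t : M) (l : V →+ ZMod 2) (q : V → ZMod 2) : M → ℂ :=
  fun x => if hx : x + t ∈ V then phase (l ⟨x + t, hx⟩) (q ⟨x + t, hx⟩) else 0

variable {V : Submodule (ZMod 2) M} {t : M} {l : V →+ ZMod 2} {q : V → ZMod 2}

lemma cosetState_ne_zero_iff {x : M} : cosetState V t l q x ≠ 0 ↔ x + t ∈ V := by
  unfold cosetState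
  split_ifs with hx <;> simp [hx, phase_ne_zero]

lemma cosetState_add_self (v : V) : cosetState V t l q (v + t) = phase (l v) (q v) := by
  have hv : (v : M) + t + t = v := by rw [add_assoc, ZModModule.add_self, add_zero]
  simp only [cosetState, hv, SetLike.coe_mem, dif_pos]

lemma cosetState_self (hq : q 0 = 0) : cosetState V t l q t = 1 := by
  simpa [hq] using cosetState_add_self (t := t) (l := l) (q := q) 0

lemma cosetState_add_right (s : V) :
    cosetState V (t + s) l q = phase (l s) (q s) • cosetState V t l (rebase l q s) := by
  ext x
  by_cases hx : x + t ∈ V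
  · obtain ⟨v, rfl⟩ : ∃ v : V, (v : M) + t = x :=
      ⟨⟨x + t, hx⟩, by rw [add_assoc, ZModModule.add_self, add_zero]⟩
    have hvs : (v : M) + t = ↑(v + s) + (t + s) := by
      rw [Submodule.coe_add, add_add_add_comm, ZModModule.add_self, add_zero]
    rw [Pi.smul_apply, cosetState_add_self, smul_eq_mul, ← phase_rebase, hvs,
      cosetState_add_self, add_comm v s]
  · have hxs : x + (t + s) ∉ V := by
      rwa [← add_assoc, Submodule.add_mem_iff_left _ s.2]
    simp [cosetState, hx, hxs]

end CosetState

section StabParam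

variable {M : Type*} [AddCommGroup M] [Module (ZMod 2) M]

abbrev StabParam (M : Type*) [AddCommGroup M] [Module (ZMod 2) M] :=
  Σ V : Submodule (ZMod 2) M, (M ⧸ V) × (V →+ ZMod 2) × QuadForm V

/-- The state is based at the fixed representative `Quotient.out` of its support, where it takes
the value `1`; this normalisation makes `StabParam.line` injective. -/
def StabParam.line (p : StabParam M) : Submodule ℂ (M → ℂ) :=
  Submodule.span ℂ {cosetState p.1 (Quotient.out p.2.1) p.2.2.1 p.2.2.2.1}

lemma le_of_forall_add_mem {V V' : Submodule (ZMod 2) M} {t t' : M}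
    (h : ∀ x, x + t ∈ V → x + t' ∈ V') : V ≤ V' := by
  intro v hv
  have h₁ : v + t + t' ∈ V' := h _ (by rwa [add_assoc, ZModModule.add_self, add_zero])
  have h₂ : t + t' ∈ V' := h t (by simp [ZModModule.add_self])
  simpa [add_assoc, ZModModule.add_self] using V'.add_mem h₁ h₂

lemma StabParam.line_injective : Function.Injective (StabParam.line (M := M)) := by
  rintro ⟨V, c, l, q, hq⟩ ⟨V', c', l', q', hq'⟩ h
  have hmem : cosetState V (Quotient.out c) l q ∈
      Submodule.span ℂ {cosetState V' (Quotient.out c') l' q'} := by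
    change _ ∈ StabParam.line ⟨V', c', l', q', hq'⟩
    rw [← h]
    exact Submodule.mem_span_singleton_self _
  obtain ⟨a, ha⟩ := Submodule.mem_span_singleton.1 hmem
  have ha0 : a ≠ 0 := by
    rintro rfl
    simpa [cosetState_self hq.1] using congrFun ha (Quotient.out c)
  have hsupp (x : M) : x + Quotient.out c ∈ V ↔ x + Quotient.out c' ∈ V' := by
    rw [← cosetState_ne_zero_iff (l := l) (q := q), ← cosetState_ne_zero_iff (l := l') (q := q'),
      ← ha, Pi.smul_apply, smul_eq_mul, mul_ne_zero_iff, and_iff_right ha0]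
  obtain rfl : V = V' := le_antisymm (le_of_forall_add_mem fun x => (hsupp x).1)
    (le_of_forall_add_mem fun x => (hsupp x).2)
  obtain rfl : c = c' := by
    have hcc : Quotient.out c + Quotient.out c' ∈ V :=
      (hsupp _).1 (by simp [ZModModule.add_self])
    rw [← Quotient.out_eq c, ← Quotient.out_eq c']
    exact (Submodule.Quotient.eq V).2 (by rwa [ZModModule.sub_eq_add])
  obtain rfl : a = 1 := by
    simpa [cosetState_self hq.1, cosetState_self hq'.1] using congrFun ha (Quotient.out c)
  have hlq (v : V) : l v = l' v ∧ q v = q' v := by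
    simpa [cosetState_add_self, phase_inj] using (congrFun ha (v + Quotient.out c)).symm
  obtain rfl : l = l' := AddMonoidHom.ext fun v => (hlq v).1
  obtain rfl : q = q' := funext fun v => (hlq v).2
  rfl

lemma card_stabParam [Finite M] :
    Nat.card (StabParam M) =
      2 ^ finrank (ZMod 2) M * ∏ k ∈ Finset.Icc 1 (finrank (ZMod 2) M), (2 ^ k + 1) := by
  have hfib (V : Submodule (ZMod 2) M) :
      Nat.card ((M ⧸ V) × (V →+ ZMod 2) × QuadForm V) =
        2 ^ finrank (ZMod 2) M * 2 ^ (finrank (ZMod 2) V + 1).choose 2 := by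
    rw [Nat.card_prod, Nat.card_prod, Module.natCard_eq_pow_finrank (K := ZMod 2), Nat.card_zmod,
      card_addMonoidHom_zmod_two, card_quadForm, ← V.finrank_quotient_add_finrank, pow_add]
    ring
  have (V : Submodule (ZMod 2) M) : Finite ((M ⧸ V) × (V →+ ZMod 2) × QuadForm V) :=
    Nat.finite_of_card_ne_zero (by rw [hfib]; positivity)
  rw [Nat.card_sigma, Finset.sum_congr rfl fun V _ => hfib V, ← Finset.mul_sum,
    sum_two_pow_choose_finrank_submodule]

end StabParam

section AffineDirection

variable {M : Type*} [AddCommGroup M] [Module (ZMod 2) M]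

def affineDirection (A : Set M) : Submodule (ZMod 2) M where
  carrier := {v | ∀ x ∈ A, x + v ∈ A}
  add_mem' hv hw x hx := by
    rw [← add_assoc]
    exact hw _ (hv x hx)
  zero_mem' x hx := by rwa [add_zero]
  smul_mem' c v hv x hx := by
    rcases zmod_two_eq_zero_or_one c with rfl | rfl
    · rwa [zero_smul, add_zero]
    · rw [one_smul]
      exact hv x hx

lemma mem_iff_add_mem_affineDirection {A : Set M}
    (hA : ∀ x ∈ A, ∀ y ∈ A, ∀ z ∈ A, x + y + z ∈ A) {t : M} (ht : t ∈ A) (x : M) :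
    x ∈ A ↔ x + t ∈ affineDirection A := by
  refine ⟨fun hx y hy => by simpa [add_assoc] using hA y hy x hx t ht, fun h => ?_⟩
  simpa [add_left_comm t, ZModModule.add_self] using h t ht

end AffineDirection

section Stabilizer

variable {n : ℕ}

/-- With `π t = 0` we have `π x = x + t` on the support, so `cosetState` is literally the
stabilizer formula for `l ∘ π` and `q ∘ π`. -/
lemma isStabilizerState_cosetState {V : Submodule (ZMod 2) (F2 n)} {t : F2 n}
    {l : V →+ ZMod 2} {q : V → ZMod 2} (hq : IsQuadForm q) (π : F2 n →ₗ[ZMod 2] V)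
    (hπ : ∀ v : V, π v = v) (ht : π t = 0) : IsStabilizerState (cosetState V t l q) := by
  refine ⟨{x | x + t ∈ V}, l ∘ π, q ∘ π, ⟨⟨t, by simp [ZModModule.add_self]⟩, ?_⟩,
    fun x y => by simp, hq.comp π.toAddMonoidHom, fun x => ?_⟩
  · intro x hx y hy z hz
    have h : x + y + z + t = (x + t) + (y + t) + (z + t) := by
      rw [show (x + t) + (y + t) + (z + t) = x + y + z + t + (t + t) by abel,
        ZModModule.add_self, add_zero]
    simpa [h] using V.add_mem (V.add_mem hx hy) hz
  · by_cases hx : x + t ∈ V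
    · have hπx : π x = ⟨x + t, hx⟩ := by
        rw [← hπ ⟨x + t, hx⟩, Submodule.coe_mk, map_add, ht, add_zero]
      simp [cosetState, hx, hπx, phase]
    · simp [cosetState, hx]

lemma span_cosetState_mem_stabLines (V : Submodule (ZMod 2) (F2 n)) (t : F2 n)
    (l : V →+ ZMod 2) {q : V → ZMod 2} (hq : IsQuadForm q) :
    Submodule.span ℂ {cosetState V t l q} ∈ stabLines n := by
  obtain ⟨U, hU⟩ := V.exists_isCompl
  set π := V.projectionOnto U hU
  have hπ : ∀ v : V, π v = v := Submodule.projectionOnto_apply_left hU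
  have hπ0 : π (t + π t) = 0 := by rw [map_add, hπ, ZModModule.add_self]
  have h : cosetState V t l q = phase (l (π t)) (q (π t)) •
      cosetState V (t + π t) l (rebase l q (π t)) := by
    rw [← cosetState_add_right, add_assoc, ZModModule.add_self, add_zero]
  refine ⟨_, isStabilizerState_cosetState (l := l) (isQuadForm_rebase hq l (π t)) π hπ hπ0, ?_⟩
  rw [h]
  exact Submodule.span_singleton_smul_eq (phase_ne_zero _ _).isUnit _

lemma exists_line_eq_span_of_isStabilizerState {σ : F2 n → ℂ} (hσ : IsStabilizerState σ) :
    ∃ p : StabParam (F2 n), p.line = Submodule.span ℂ {σ} := by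
  obtain ⟨A, l, q, ⟨⟨a, ha⟩, hA⟩, hl, hq, hσ⟩ := hσ
  set V := affineDirection A
  set L : F2 n →+ ZMod 2 := AddMonoidHom.mk' l hl
  set c : F2 n ⧸ V := Submodule.Quotient.mk a
  set t := Quotient.out c
  have ht : t ∈ A := by
    refine (mem_iff_add_mem_affineDirection hA ha t).2 ?_
    rw [← ZModModule.sub_eq_add]
    exact (Submodule.Quotient.eq V).1 (Quotient.out_eq c)
  refine ⟨⟨V, c, L.comp V.subtype.toAddMonoidHom,
    rebase L q t ∘ V.subtype, (isQuadForm_rebase hq L t).comp V.subtype.toAddMonoidHom⟩, ?_⟩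
  have h : σ = phase (l t) (q t) •
      cosetState V t (L.comp V.subtype.toAddMonoidHom) (rebase L q t ∘ V.subtype) := by
    ext x
    by_cases hx : x ∈ A
    · obtain ⟨v, rfl⟩ : ∃ v : V, (v : F2 n) + t = x :=
        ⟨⟨x + t, (mem_iff_add_mem_affineDirection hA ht x).1 hx⟩,
          by rw [add_assoc, ZModModule.add_self, add_zero]⟩
      rw [hσ, if_pos hx, Pi.smul_apply, cosetState_add_self, smul_eq_mul, add_comm]
      exact phase_rebase L q t v
    · have hxt : x + t ∉ V := fun h => hx ((mem_iff_add_mem_affineDirection hA ht x).2 h)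
      simp [hσ, hx, cosetState, hxt]
  rw [h]
  exact (Submodule.span_singleton_smul_eq (phase_ne_zero _ _).isUnit _).symm

lemma stabLines_eq_range (n : ℕ) : stabLines n = Set.range (StabParam.line (M := F2 n)) := by
  ext L
  constructor
  · rintro ⟨σ, hσ, rfl⟩
    exact exists_line_eq_span_of_isStabilizerState hσ
  · rintro ⟨⟨V, c, l, q, hq⟩, rfl⟩
    exact span_cosetState_mem_stabLines V _ l hq

end Stabilizer

theorem card_stabLines_general (n : ℕ) :
    (stabLines n).ncard = 2 ^ n * ∏ k ∈ Finset.Icc 1 n, (2 ^ k + 1) := by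
  rw [stabLines_eq_range, Set.ncard_range_of_injective StabParam.line_injective, card_stabParam,
    Module.finrank_fin_fun]

/-- The number of projective stabilizer states on `n` qubits equals
`2ⁿ·∏_{k=1}^n (2^k + 1)`. -/
theorem card_stabLines (n : ℕ) (hn : 1 ≤ n) :
    (stabLines n).ncard = 2 ^ n * ∏ k ∈ Finset.Icc 1 n, (2 ^ k + 1) :=
  card_stabLines_general n

end StabPaper
end
end
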